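/- Let X be a finite nonempty set, θ : X → ℝ, and Z = Σ_{x∈X} exp(θ(x)). Let {γ(x)}_{x∈X} be independent real random variables, each distributed according to the zero-mean Gumbel distribution. Then for every x̂ ∈ X, the probability that x̂ is the (almost surely unique) maximizer of x ↦ θ(x) + γ(x) equals its Gibbs probability: P_γ[ θ(x̂) + γ(x̂) > θ(x) + γ(x) for all x ∈ X with x ≠ x̂ ] = exp(θ(x̂)) / Z. -/

import Mathlib

/-!
Given `γ x₀ = t`, the other noises independently satisfy `γ x < t + θ x₀ - θ x`, with
probability `∏ F (t + θ x₀ - θ x)` where `F t = exp (-e^{-(t+c)})`. Shifting the argument of `F`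
rescales the double exponent, so this product is `exp (-(A - 1) e^{-(t+c)})` with
`A = Z / exp (θ x₀)`. Integrating against the Gumbel density `e^{-(t+c)} F t` gives
`∫ e^{-(t+c)} exp (-A e^{-(t+c)}) dt = 1 / A`.
-/

open MeasureTheory Real ProbabilityTheory Set Filter Topology Finset

lemma setLIntegral_Iic_ofReal_deriv {f f' : ℝ → ℝ} {m : ℝ}
    (hderiv : ∀ x, HasDerivAt f (f' x) x) (hf' : ∀ x, 0 ≤ f' x)
    (hbot : Tendsto f atBot (𝓝 m)) (a : ℝ) :
    ∫⁻ x in Iic a, ENNReal.ofReal (f' x) = ENNReal.ofReal (f a - m) := by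
  have hint : ∀ u v, IntervalIntegrable f' volume u v := fun u v =>
    intervalIntegral.intervalIntegrable_deriv_of_nonneg
      (fun x _ => (hderiv x).continuousAt.continuousWithinAt) (fun x _ => hderiv x)
      (fun x _ => hf' x)
  have hftc : ∀ u, ∫ x in u..a, ‖f' x‖ = f a - f u := fun u => by
    simp_rw [Real.norm_of_nonneg (hf' _)]
    exact intervalIntegral.integral_eq_sub_of_hasDerivAt (fun x _ => hderiv x) (hint u a)
  have hIic : IntegrableOn f' (Iic a) :=
    integrableOn_Iic_of_intervalIntegral_norm_tendsto (f a - m) a (l := atBot) (a := id)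
      (fun u => (hint u a).1) tendsto_id
      (by simpa only [id, hftc] using tendsto_const_nhds.sub hbot)
  rw [← ofReal_integral_eq_lintegral_ofReal hIic (ae_of_all _ hf'),
    integral_Iic_of_hasDerivAt_of_tendsto' (fun x _ => hderiv x) hIic hbot]

/-- `gumbelCDF b = F ^ b` for the zero-mean Gumbel cdf `F = gumbelCDF 1`. -/
noncomputable def gumbelCDF (b t : ℝ) : ℝ :=
  exp (-(b * exp (-(t + eulerMascheroniConstant))))

noncomputable def gumbelPDF (b t : ℝ) : ℝ :=
  exp (-(t + eulerMascheroniConstant)) * gumbelCDF b t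

lemma gumbelCDF_pos (b t : ℝ) : 0 < gumbelCDF b t := exp_pos _

lemma gumbelPDF_nonneg (b t : ℝ) : 0 ≤ gumbelPDF b t :=
  (mul_pos (exp_pos _) (gumbelCDF_pos b t)).le

lemma gumbelCDF_add (b t s : ℝ) : gumbelCDF b (t + s) = gumbelCDF (b * exp (-s)) t := by
  simp only [gumbelCDF, mul_assoc, ← exp_add]
  ring_nf

lemma prod_gumbelCDF {ι : Type*} (s : Finset ι) (b : ι → ℝ) (t : ℝ) :
    ∏ i ∈ s, gumbelCDF (b i) t = gumbelCDF (∑ i ∈ s, b i) t := by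
  simp only [gumbelCDF, ← exp_sum, sum_mul, sum_neg_distrib]

lemma gumbelPDF_mul_gumbelCDF (a b t : ℝ) :
    gumbelPDF a t * gumbelCDF b t = gumbelPDF (a + b) t := by
  simp only [gumbelPDF, gumbelCDF, ← exp_add]
  ring_nf

lemma hasDerivAt_gumbelCDF (b t : ℝ) : HasDerivAt (gumbelCDF b) (b * gumbelPDF b t) t := by
  refine (((hasDerivAt_id' t).add_const eulerMascheroniConstant).neg.exp.const_mul b).neg.exp
    |>.congr_deriv ?_
  simp only [gumbelPDF, gumbelCDF, Pi.neg_apply]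
  ring

lemma continuous_gumbelCDF (b : ℝ) : Continuous (gumbelCDF b) :=
  continuous_iff_continuousAt.2 fun t => (hasDerivAt_gumbelCDF b t).continuousAt

lemma tendsto_gumbelCDF_atBot {b : ℝ} (hb : 0 < b) : Tendsto (gumbelCDF b) atBot (𝓝 0) := by
  have h : Tendsto (fun t => -(t + eulerMascheroniConstant)) atBot atTop :=
    tendsto_neg_atBot_atTop.comp (tendsto_atBot_add_const_right _ _ tendsto_id)
  exact tendsto_exp_atBot.comp
    (tendsto_neg_atTop_atBot.comp ((tendsto_exp_atTop.comp h).const_mul_atTop hb))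

lemma tendsto_gumbelCDF_atTop (b : ℝ) : Tendsto (gumbelCDF b) atTop (𝓝 1) := by
  have h : Tendsto (fun t => -(t + eulerMascheroniConstant)) atTop atBot :=
    tendsto_neg_atTop_atBot.comp (tendsto_atTop_add_const_right _ _ tendsto_id)
  have h' : Tendsto (fun t => -(b * exp (-(t + eulerMascheroniConstant)))) atTop (𝓝 0) := by
    simpa using ((tendsto_exp_atBot.comp h).const_mul b).neg
  rw [← exp_zero]
  exact (continuous_exp.tendsto 0).comp h'

lemma continuous_gumbelPDF (b : ℝ) : Continuous (gumbelPDF b) :=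
  (by fun_prop : Continuous fun t => exp (-(t + eulerMascheroniConstant))).mul
    (continuous_gumbelCDF b)

lemma setLIntegral_gumbelPDF_Iic {b : ℝ} (hb : 0 < b) (a : ℝ) :
    ∫⁻ t in Iic a, ENNReal.ofReal (gumbelPDF b t) = ENNReal.ofReal (gumbelCDF b a / b) := by
  have hderiv (t : ℝ) : HasDerivAt (fun s => gumbelCDF b s / b) (gumbelPDF b t) t := by
    simpa [mul_div_cancel_left₀ _ hb.ne'] using (hasDerivAt_gumbelCDF b t).div_const b
  simpa using setLIntegral_Iic_ofReal_deriv hderiv (gumbelPDF_nonneg b)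
    ((tendsto_gumbelCDF_atBot hb).div_const b) a

lemma lintegral_gumbelPDF {b : ℝ} (hb : 0 < b) :
    ∫⁻ t, ENNReal.ofReal (gumbelPDF b t) = ENNReal.ofReal b⁻¹ := by
  set μ := volume.withDensity fun t => ENNReal.ofReal (gumbelPDF b t)
  have hIic (a : ℝ) : μ (Iic a) = ENNReal.ofReal (gumbelCDF b a / b) := by
    rw [withDensity_apply _ measurableSet_Iic, setLIntegral_gumbelPDF_Iic hb]
  have hlim := (tendsto_measure_Iic_atTop μ).congr hIic
  rw [← setLIntegral_univ, ← withDensity_apply _ MeasurableSet.univ]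
  refine tendsto_nhds_unique hlim ?_
  simpa using ENNReal.tendsto_ofReal ((tendsto_gumbelCDF_atTop b).div_const b)

noncomputable def gumbelMeasure : Measure ℝ :=
  volume.withDensity fun t => ENNReal.ofReal (gumbelPDF 1 t)

lemma gumbelMeasure_Iic (a : ℝ) : gumbelMeasure (Iic a) = ENNReal.ofReal (gumbelCDF 1 a) := by
  rw [gumbelMeasure, withDensity_apply _ measurableSet_Iic, setLIntegral_gumbelPDF_Iic one_pos,
    div_one]

lemma gumbelMeasure_Iio (a : ℝ) : gumbelMeasure (Iio a) = ENNReal.ofReal (gumbelCDF 1 a) := by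
  rw [measure_congr (Iio_ae_eq_Iic' (μ := gumbelMeasure) ?_), gumbelMeasure_Iic]
  exact withDensity_absolutelyContinuous _ _ (measure_singleton a)

lemma lintegral_prod_gumbelCDF_add_gumbelMeasure {ι : Type*} (s : Finset ι) (c : ι → ℝ) :
    ∫⁻ t, ∏ i ∈ s, ENNReal.ofReal (gumbelCDF 1 (t + c i)) ∂gumbelMeasure =
      ENNReal.ofReal (1 + ∑ i ∈ s, exp (-c i))⁻¹ := by
  have hprod (t : ℝ) : ∏ i ∈ s, ENNReal.ofReal (gumbelCDF 1 (t + c i)) =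
      ENNReal.ofReal (gumbelCDF (∑ i ∈ s, exp (-c i)) t) := by
    rw [← ENNReal.ofReal_prod_of_nonneg fun i _ => (gumbelCDF_pos _ _).le]
    simp only [gumbelCDF_add, one_mul, prod_gumbelCDF]
  simp_rw [hprod]
  rw [gumbelMeasure, lintegral_withDensity_eq_lintegral_mul _
    (continuous_gumbelPDF 1).measurable.ennreal_ofReal
    (continuous_gumbelCDF _).measurable.ennreal_ofReal]
  simp_rw [Pi.mul_apply, ← ENNReal.ofReal_mul (gumbelPDF_nonneg 1 _), gumbelPDF_mul_gumbelCDF]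
  exact lintegral_gumbelPDF (by positivity)

lemma map_eq_gumbelMeasure {Ω : Type*} [MeasurableSpace Ω] {P : Measure Ω} [IsFiniteMeasure P]
    {g : Ω → ℝ} (hg : Measurable g) (hcdf : ∀ t, P {ω | g ω ≤ t} = ENNReal.ofReal (gumbelCDF 1 t)) :
    P.map g = gumbelMeasure :=
  Measure.ext_of_Iic _ _ fun a => by
    rw [Measure.map_apply hg measurableSet_Iic, gumbelMeasure_Iic]
    exact hcdf a

lemma ProbabilityTheory.iIndepFun.measure_forall_lt_eq_lintegral {ι Ω : Type*} [Fintype ι]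
    [DecidableEq ι] [MeasurableSpace Ω] {P : Measure Ω} [IsFiniteMeasure P]
    {γ : ι → Ω → ℝ} (hmeas : ∀ i, Measurable (γ i)) (hindep : iIndepFun γ P) (i₀ : ι)
    {f : ι → ℝ → ℝ} (hf : ∀ i, Measurable (f i)) :
    P {ω | ∀ i ≠ i₀, γ i ω < f i (γ i₀ ω)} =
      ∫⁻ t, ∏ i ∈ univ.erase i₀, P {ω | γ i ω < f i t} ∂(P.map (γ i₀)) := by
  set T := univ.erase i₀
  let V : Ω → (T → ℝ) := fun ω i => γ i ω
  have hV : Measurable V := measurable_pi_lambda _ fun i => hmeas i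
  have hindep₀ : IndepFun (γ i₀) V P := by
    have h := hindep.indepFun_finset {i₀} T (by simp [T]) hmeas
    exact h.comp (measurable_pi_apply ⟨i₀, mem_singleton_self i₀⟩) measurable_id
  let B : Set (ℝ × (T → ℝ)) := {p | ∀ i : T, p.2 i < f i p.1}
  have hB : MeasurableSet B := by
    simp only [B, ofPred_forall]
    exact .iInter fun i => measurableSet_lt (by fun_prop) ((hf i).comp measurable_fst)
  have hevent : {ω | ∀ i ≠ i₀, γ i ω < f i (γ i₀ ω)} = (fun ω => (γ i₀ ω, V ω)) ⁻¹' B := by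
    ext ω
    simp [B, V, T]
  have hslice (t : ℝ) : P.map V (Prod.mk t ⁻¹' B) = ∏ i ∈ T, P {ω | γ i ω < f i t} := by
    have hpre : V ⁻¹' (Prod.mk t ⁻¹' B) = ⋂ i ∈ T, γ i ⁻¹' Iio (f i t) := by
      ext ω
      simp [B, V]
    rw [Measure.map_apply hV (measurable_prodMk_left hB), hpre,
      hindep.meas_biInter fun i _ => ⟨Iio (f i t), measurableSet_Iio, rfl⟩]
    rfl
  rw [hevent, ← Measure.map_apply ((hmeas i₀).prodMk hV) hB,
    (indepFun_iff_map_prod_eq_prod_map_map (hmeas i₀).aemeasurable hV.aemeasurable).1 hindep₀,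
    Measure.prod_apply hB]
  simp_rw [hslice]

theorem prob_argmax_eq_gibbs_general
    {X : Type*} [Fintype X] (θ : X → ℝ)
    {Ω : Type*} [MeasurableSpace Ω] (P : Measure Ω) [IsProbabilityMeasure P]
    (γ : X → Ω → ℝ) (hmeas : ∀ x, Measurable (γ x))
    (hindep : iIndepFun γ P)
    (hcdf : ∀ x t, P {ω | γ x ω ≤ t} =
      ENNReal.ofReal (exp (-exp (-(t + eulerMascheroniConstant)))))
    (x₀ : X) :
    P {ω | ∀ x : X, x ≠ x₀ → θ x + γ x ω < θ x₀ + γ x₀ ω} =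
      ENNReal.ofReal (exp (θ x₀) / ∑ x : X, exp (θ x)) := by
  classical
  have hlaw (x : X) : P.map (γ x) = gumbelMeasure :=
    map_eq_gumbelMeasure (hmeas x) fun t => by simpa [gumbelCDF] using hcdf x t
  have hlt (x : X) (s : ℝ) : P {ω | γ x ω < s} = ENNReal.ofReal (gumbelCDF 1 s) := by
    rw [← gumbelMeasure_Iio, ← hlaw x, Measure.map_apply (hmeas x) measurableSet_Iio]
    rfl
  have hevent : {ω | ∀ x : X, x ≠ x₀ → θ x + γ x ω < θ x₀ + γ x₀ ω} =
      {ω | ∀ x ≠ x₀, γ x ω < γ x₀ ω + (θ x₀ - θ x)} := by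
    ext ω
    exact forall₂_congr fun x _ => by constructor <;> intro h <;> linarith
  have hweights : 1 + ∑ x ∈ univ.erase x₀, exp (-(θ x₀ - θ x)) =
      (∑ x, exp (θ x)) / exp (θ x₀) := by
    rw [← add_sum_erase _ _ (mem_univ x₀), add_div, div_self (exp_pos _).ne', sum_div]
    simp_rw [neg_sub, exp_sub]
  rw [hevent, hindep.measure_forall_lt_eq_lintegral hmeas x₀
    (f := fun x t => t + (θ x₀ - θ x)) fun x => by fun_prop, hlaw x₀]
  simp_rw [hlt]
  rw [lintegral_prod_gumbelCDF_add_gumbelMeasure, hweights, inv_div]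

/-- Let `X` be a finite nonempty set, `θ : X → ℝ`, and
`Z = ∑ x, exp (θ x)`.  If `γ x`, `x : X`, are independent random variables, each with the
zero-mean Gumbel distribution (cdf `t ↦ exp (-exp (-(t + c)))`, `c` the Euler–Mascheroni
constant), then for every `x₀`, the probability that `x₀` is the strict maximizer of
`x ↦ θ x + γ x` equals its Gibbs probability `exp (θ x₀) / Z`. -/
theorem prob_argmax_eq_gibbs
    {X : Type*} [Fintype X] [Nonempty X] (θ : X → ℝ)
    {Ω : Type*} [MeasurableSpace Ω] (P : Measure Ω) [IsProbabilityMeasure P]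
    (γ : X → Ω → ℝ) (hmeas : ∀ x, Measurable (γ x))
    (hindep : iIndepFun γ P)
    (hcdf : ∀ x t, P {ω | γ x ω ≤ t} =
      ENNReal.ofReal (exp (-exp (-(t + eulerMascheroniConstant)))))
    (x₀ : X) :
    P {ω | ∀ x : X, x ≠ x₀ → θ x + γ x ω < θ x₀ + γ x₀ ω} =
      ENNReal.ofReal (exp (θ x₀) / ∑ x : X, exp (θ x)) :=
  prob_argmax_eq_gibbs_general θ P γ hmeas hindep hcdf x₀
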